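/- arXiv:1402.2999 — 2 statements merged into one kernel-verified Lean document; each statement's English description precedes it below -/
import Mathlib

section
/- Let Y be a compact metric space and φ : Y × ℝⁿ → ℝ be such that for every y ∈ Y the function x ↦ φ(y,x) is convex and differentiable, and for every x ∈ ℝⁿ the function y ↦ φ(y,x) is upper semicontinuous. Define Φ(x) = sup_{y ∈ Y} φ(y,x) and assume Φ is finite in a neighborhood of a point x. If the function y ↦ φ(y,x) attains its maximum over Y at a unique point y(x) ∈ Y, then Φ is differentiable at x and ∇Φ(x) = ∇_x φ(y(x), x). -/
/-!
For a convex function `Φ` on a finite-dimensional space, differentiability at `x` with derivative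
`L` follows from the one-sided directional bounds `Φ (x + t • d) ≤ Φ x + t * (L d + ε)` for small
`t > 0`: convexity gives the matching lower bound through `-d`, and the bounds in finitely many
directions whose convex hull is a neighbourhood of `0` control all of `Φ` near `x`.

The directional bound for `Φ = sup_y φ y` comes from the unique maximizer `y₀`. Pick `s > 0` with
`φ y₀ (x + s • d) < φ y₀ x + s * c`. The `y` with `φ y (x + s • d) ≥ Φ x + s * c` form a compact
set (upper semicontinuity) avoiding `y₀`, so `φ y x ≤ Φ x - η` on it for some `η > 0`. Convexity of
`φ y` on the segment `[x, x + s • d]` then gives `φ y (x + t • d) ≤ Φ x + t * c` for every `y`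
once `t` is small.
-/

open Filter Set Topology

lemma UpperSemicontinuous.bddAbove_range {Y : Type*} [TopologicalSpace Y] [CompactSpace Y]
    {f : Y → ℝ} (hf : UpperSemicontinuous f) : BddAbove (range f) := by
  simpa using (hf.upperSemicontinuousOn univ).bddAbove_of_isCompact isCompact_univ

lemma IsCompact.exists_pos_forall_le_sub {Y : Type*} [TopologicalSpace Y] {K : Set Y}
    (hK : IsCompact K) {f : Y → ℝ} (hf : UpperSemicontinuousOn f K) {c : ℝ}
    (hlt : ∀ y ∈ K, f y < c) : ∃ η > 0, ∀ y ∈ K, f y ≤ c - η := by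
  rcases K.eq_empty_or_nonempty with rfl | hne
  · exact ⟨1, one_pos, by simp⟩
  obtain ⟨y₁, hy₁, hmax⟩ := hf.exists_isMaxOn hne hK
  exact ⟨c - f y₁, sub_pos.2 (hlt y₁ hy₁), fun y hy => by linarith [isMaxOn_iff.1 hmax y hy]⟩

lemma convexOn_ciSup {ι E : Type*} [Nonempty ι] [AddCommGroup E] [Module ℝ E] {s : Set E}
    {f : ι → E → ℝ} (hf : ∀ i, ConvexOn ℝ s (f i))
    (hbdd : ∀ x ∈ s, BddAbove (range fun i => f i x)) : ConvexOn ℝ s fun x => ⨆ i, f i x := by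
  refine ⟨(hf (Classical.arbitrary ι)).1, fun a ha b hb μ ν hμ hν hμν => ciSup_le fun i => ?_⟩
  calc f i (μ • a + ν • b) ≤ μ • f i a + ν • f i b := (hf i).2 ha hb hμ hν hμν
    _ ≤ μ • (⨆ i, f i a) + ν • ⨆ i, f i b := by
      gcongr <;> exact le_ciSup (hbdd _ ‹_›) i

lemma ConvexOn.apply_add_smul_le {E : Type*} [AddCommGroup E] [Module ℝ E] {f : E → ℝ}
    (hf : ConvexOn ℝ univ f) (x d : E) {s t : ℝ} (hs : 0 < s) (ht : 0 ≤ t) (hts : t ≤ s) :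
    f (x + t • d) ≤ (1 - t / s) * f x + t / s * f (x + s • d) := by
  have hcomb : x + t • d = (1 - t / s) • x + (t / s) • (x + s • d) := by
    rw [smul_add, smul_smul, div_mul_cancel₀ t hs.ne']
    module
  rw [hcomb]
  exact hf.2 (mem_univ _) (mem_univ _) (sub_nonneg.2 ((div_le_one hs).2 hts)) (by positivity)
    (by ring)

lemma HasFDerivAt.exists_pos_apply_add_smul_lt {E : Type*} [NormedAddCommGroup E]
    [NormedSpace ℝ E] {f : E → ℝ} {L : E →L[ℝ] ℝ} {x : E} (hf : HasFDerivAt f L x) (d : E)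
    {ε : ℝ} (hε : 0 < ε) : ∃ s > 0, f (x + s • d) < f x + s * (L d + ε) := by
  have hslope := (hf.hasLineDerivAt d).tendsto_slope_zero_right
  obtain ⟨s, hlt, hs⟩ := ((hslope.eventually (gt_mem_nhds (lt_add_of_pos_right _ hε))).and
    self_mem_nhdsWithin).exists
  refine ⟨s, hs, ?_⟩
  rw [smul_eq_mul, inv_mul_lt_iff₀ hs] at hlt
  linarith

section Danskin

variable {Y E : Type*} [TopologicalSpace Y] [CompactSpace Y] [AddCommGroup E] [Module ℝ E]

theorem eventually_forall_le_of_unique_maximizer {φ : Y → E → ℝ}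
    (hconv : ∀ y, ConvexOn ℝ univ (φ y)) (husc : ∀ z, UpperSemicontinuous fun y => φ y z)
    {x d : E} {y₀ : Y} (hmax : ∀ y, φ y x ≤ φ y₀ x) (huniq : ∀ y, φ y x = φ y₀ x → y = y₀)
    {s c : ℝ} (hs : 0 < s) (hsc : φ y₀ (x + s • d) < φ y₀ x + s * c) :
    ∀ᶠ t in 𝓝[>] 0, ∀ y, φ y (x + t • d) ≤ φ y₀ x + t * c := by
  set m := φ y₀ x
  set K := (fun y => φ y (x + s • d)) ⁻¹' Ici (m + s * c)
  have hK : IsCompact K := ((husc _).isClosed_preimage _).isCompact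
  obtain ⟨η, hη, hKη⟩ : ∃ η > 0, ∀ y ∈ K, φ y x ≤ m - η := by
    refine hK.exists_pos_forall_le_sub ((husc x).upperSemicontinuousOn K) fun y hy => ?_
    refine (hmax y).lt_of_ne fun h => ?_
    obtain rfl := huniq y h
    exact absurd hy (not_le.2 hsc)
  obtain ⟨M, hM⟩ := (husc (x + s • d)).bddAbove_range
  have hsmall : ∀ᶠ t in 𝓝 (0 : ℝ), t / s * (M - m) - t * c < (1 - t / s) * η :=
    ContinuousAt.eventually_lt (by fun_prop) (by fun_prop) (by simpa using hη)
  filter_upwards [self_mem_nhdsWithin, nhdsWithin_le_nhds (hsmall.and (eventually_lt_nhds hs))]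
    with t (ht : 0 < t) ⟨htη, hts⟩ y
  have hseg := (hconv y).apply_add_smul_le x d hs ht.le hts.le
  have hw₁ : 0 ≤ 1 - t / s := sub_nonneg.2 ((div_le_one hs).2 hts.le)
  have hw₂ : 0 ≤ t / s := by positivity
  by_cases hy : y ∈ K
  · have h1 := mul_le_mul_of_nonneg_left (hKη y hy) hw₁
    have h2 := mul_le_mul_of_nonneg_left (hM ⟨y, rfl⟩ : φ y (x + s • d) ≤ M) hw₂
    linarith
  · have h1 := mul_le_mul_of_nonneg_left (hmax y) hw₁
    have h2 := mul_le_mul_of_nonneg_left (not_le.1 hy).le hw₂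
    have h3 : t / s * (m + s * c) = t / s * m + t * c := by field_simp
    linarith

end Danskin

section FiniteDimensional

variable {E : Type*} [NormedAddCommGroup E] [NormedSpace ℝ E] [FiniteDimensional ℝ E]

lemma ConvexOn.eventually_le_mul_norm_of_forall_eventually_le {h : E → ℝ}
    (hh : ConvexOn ℝ univ h) (h0 : h 0 = 0)
    (hdir : ∀ d : E, ∀ ε > 0, ∀ᶠ t in 𝓝[>] (0 : ℝ), h (t • d) ≤ t * ε) {ε : ℝ} (hε : 0 < ε) :
    ∀ᶠ z in 𝓝 (0 : E), h z ≤ ε * ‖z‖ := by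
  obtain ⟨b, hb0, -⟩ := exists_mem_interior_convexHull_affineBasis (univ_mem : univ ∈ 𝓝 (0 : E))
  obtain ⟨r, hr, hball⟩ := Metric.mem_nhds_iff.1 (mem_interior_iff_mem_nhds.1 hb0)
  have hvert : ∀ᶠ t in 𝓝[>] (0 : ℝ), ∀ i, h (t • b i) ≤ t * (ε * r / 2) :=
    eventually_all.2 fun i => hdir (b i) _ (by positivity)
  have hscale : Tendsto (fun z : E => 2 / r * ‖z‖) (𝓝[≠] 0) (𝓝[>] 0) := by
    refine tendsto_nhdsWithin_of_tendsto_nhds_of_eventually_within _ ?_ ?_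
    · exact tendsto_nhdsWithin_of_tendsto_nhds <|
        (continuous_const.mul continuous_norm : Continuous fun z : E => 2 / r * ‖z‖).tendsto' 0 0
          (by simp)
    · filter_upwards [self_mem_nhdsWithin] with z (hz : z ≠ 0)
      exact mul_pos (by positivity) (norm_pos_iff.2 hz)
  filter_upwards [eventually_nhdsWithin_iff.1 (hscale.eventually hvert)] with z hz
  rcases eq_or_ne z 0 with rfl | hz0
  · simp [h0]
  set T := 2 / r * ‖z‖ with hTdef
  have hT : 0 < T := mul_pos (by positivity) (norm_pos_iff.2 hz0)
  have hmem : T⁻¹ • z ∈ convexHull ℝ (range b) := hball <| by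
    rw [Metric.mem_ball, dist_zero_right, norm_smul, norm_inv, Real.norm_of_nonneg hT.le]
    calc T⁻¹ * ‖z‖ = r / 2 := by rw [hTdef]; field_simp
      _ < r := by linarith
  obtain ⟨_, ⟨i, rfl⟩, hi⟩ := (hh.comp_linearMap (T • LinearMap.id)).exists_ge_of_mem_convexHull
    (fun _ _ => trivial) hmem
  simp only [Function.comp_apply, LinearMap.smul_apply, LinearMap.id_apply,
    smul_inv_smul₀ hT.ne'] at hi
  calc h z ≤ h (T • b i) := hi
    _ ≤ T * (ε * r / 2) := hz hz0 i
    _ = ε * ‖z‖ := by rw [hTdef]; field_simp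

theorem ConvexOn.hasFDerivAt_of_forall_eventually_le {f : E → ℝ} (hf : ConvexOn ℝ univ f)
    {x : E} {L : E →L[ℝ] ℝ}
    (hup : ∀ d, ∀ ε > 0, ∀ᶠ t in 𝓝[>] (0 : ℝ), f (x + t • d) ≤ f x + t * (L d + ε)) :
    HasFDerivAt f L x := by
  set h : E → ℝ := fun z => f (x + z) - f x - L z
  have hh : ConvexOn ℝ univ h :=
    ((hf.translate_right x).add_const (-f x)).sub (L.toLinearMap.concaveOn convex_univ)
  have h0 : h 0 = 0 := by simp [h]
  have hup' : ∀ ε > 0, ∀ᶠ z in 𝓝 (0 : E), h z ≤ ε * ‖z‖ := by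
    refine fun ε hε => hh.eventually_le_mul_norm_of_forall_eventually_le h0 (fun d ε hε => ?_) hε
    filter_upwards [hup d ε hε] with t ht
    simp only [h, map_smul, smul_eq_mul]
    linarith
  have hlow : ∀ z, -h (-z) ≤ h z := fun z => by
    have := hh.2 (mem_univ z) (mem_univ (-z)) (by norm_num : (0 : ℝ) ≤ 1 / 2)
      (by norm_num : (0 : ℝ) ≤ 1 / 2) (by norm_num)
    rw [← smul_add, add_neg_cancel, smul_zero, h0, smul_eq_mul, smul_eq_mul] at this
    linarith
  rw [hasFDerivAt_iff_isLittleO_nhds_zero, Asymptotics.isLittleO_iff]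
  intro ε hε
  have hneg : Tendsto (fun z : E => -z) (𝓝 0) (𝓝 0) := continuous_neg.tendsto' 0 0 neg_zero
  filter_upwards [hup' ε hε, hneg.eventually (hup' ε hε)] with z hz hz'
  rw [norm_neg] at hz'
  change ‖h z‖ ≤ ε * ‖z‖
  rw [Real.norm_eq_abs, abs_le]
  exact ⟨by linarith [hlow z], hz⟩

end FiniteDimensional

theorem sup_convex_differentiable_of_unique_maximizer_general
    {n : ℕ} {Y : Type*} [MetricSpace Y] [CompactSpace Y] [Nonempty Y]
    (φ : Y → EuclideanSpace ℝ (Fin n) → ℝ)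
    (hconv : ∀ y, ConvexOn ℝ Set.univ (φ y))
    (hdiff : ∀ y, Differentiable ℝ (φ y))
    (husc : ∀ x, UpperSemicontinuous fun y => φ y x)
    (Φ : EuclideanSpace ℝ (Fin n) → ℝ)
    (hΦ : ∀ x, Φ x = ⨆ y, φ y x)
    (x : EuclideanSpace ℝ (Fin n))
    (y₀ : Y)
    (hy₀max : ∀ y, φ y x ≤ φ y₀ x)
    (hy₀uniq : ∀ y, φ y x = φ y₀ x → y = y₀) :
    HasGradientAt Φ (gradient (φ y₀) x) x := by
  have hbdd : ∀ z, BddAbove (range fun y => φ y z) := fun z => (husc z).bddAbove_range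
  have hΦx : Φ x = φ y₀ x := by
    rw [hΦ]
    exact le_antisymm (ciSup_le hy₀max) (le_ciSup (hbdd x) y₀)
  have hΦconv : ConvexOn ℝ univ Φ := by
    rw [funext hΦ]
    exact convexOn_ciSup hconv fun z _ => hbdd z
  refine hΦconv.hasFDerivAt_of_forall_eventually_le fun d ε hε => ?_
  obtain ⟨s, hs, hsc⟩ :=
    (hdiff y₀ x).hasGradientAt.hasFDerivAt.exists_pos_apply_add_smul_lt d hε
  filter_upwards [eventually_forall_le_of_unique_maximizer hconv husc hy₀max hy₀uniq hs hsc]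
    with t ht
  rw [hΦ, hΦx]
  exact ciSup_le ht

/-- Corollary 2. If moreover, at the point `x`, the upper semicontinuous
function `y ↦ φ y x` attains its maximum over the compact set `Y` at a *unique* point
`y₀ = y(x)`, then `Φ = sup_y φ y ·` is differentiable at `x` with
`∇Φ(x) = ∇ₓ φ(y(x), x)`. -/
theorem sup_convex_differentiable_of_unique_maximizer
    {n : ℕ} {Y : Type*} [MetricSpace Y] [CompactSpace Y] [Nonempty Y]
    (φ : Y → EuclideanSpace ℝ (Fin n) → ℝ)
    (hconv : ∀ y, ConvexOn ℝ Set.univ (φ y))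
    (hdiff : ∀ y, Differentiable ℝ (φ y))
    (husc : ∀ x, UpperSemicontinuous fun y => φ y x)
    (Φ : EuclideanSpace ℝ (Fin n) → ℝ)
    (hΦ : ∀ x, Φ x = ⨆ y, φ y x)
    (x : EuclideanSpace ℝ (Fin n))
    (hfin : ∀ᶠ z in nhds x, BddAbove (Set.range fun y => φ y z))
    (y₀ : Y)
    (hy₀max : ∀ y, φ y x ≤ φ y₀ x)
    (hy₀uniq : ∀ y, φ y x = φ y₀ x → y = y₀) :
    HasGradientAt Φ (gradient (φ y₀) x) x :=
  sup_convex_differentiable_of_unique_maximizer_general φ hconv hdiff husc Φ hΦ x y₀ hy₀max hy₀uniq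
end

section
/- Let F and G be real Hilbert spaces, A : F → G a bounded linear operator, g ∈ G, and J : F → ℝ convex, lower semicontinuous, and coercive, strictly convex along ker A. Let τ satisfy dist(g, closure(A F)) < τ < ‖g‖, set ε = τ², and let D(λ) = inf_{f ∈ F} [ J(f) + λ(‖A f − g‖² − ε) ]. If λ̄ > 0 maximizes D over (0, ∞), then the unique minimizer f_{λ̄} of L(·, λ̄) satisfies ‖A f_{λ̄} − g‖² = τ². -/
/-!
Perturbing the multiplier from `λ` to `λ + t` changes the Lagrangian at `f_λ` by `t d`, where
`d = ‖A f_λ - g‖² - τ²`. Convexity of `J` and the parallelogram law make `L(·, λ)` grow at least like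
`λ/2 ‖A f - A f_λ‖²` away from `f_λ`, which absorbs the change `t (‖A f - g‖² - ‖A f_λ - g‖²)` elsewhere
up to `O(t²)`. Hence `D(λ) + t d - C t² ≤ D(λ + t) ≤ D(λ)` for small `|t|`, so `t ↦ C t² - t d` has a
local minimum at `0` and `d = 0`.
-/

open Set

theorem eq_zero_of_forall_abs_le_mul_le_mul_sq {η C d : ℝ} (hη : 0 < η)
    (h : ∀ t : ℝ, |t| ≤ η → t * d ≤ C * t ^ 2) : d = 0 := by
  have hmin : IsLocalMin (fun t : ℝ => C * t ^ 2 - t * d) 0 := by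
    filter_upwards [Metric.closedBall_mem_nhds (0 : ℝ) hη] with t ht
    rw [mem_closedBall_zero_iff, Real.norm_eq_abs] at ht
    simpa using h t ht
  have hderiv : HasDerivAt (fun t : ℝ => C * t ^ 2 - t * d) (-d) 0 := by
    simpa using (((hasDerivAt_id' (0 : ℝ)).fun_pow 2).const_mul C).fun_sub
      ((hasDerivAt_id' (0 : ℝ)).mul_const d)
  exact neg_eq_zero.mp (hmin.hasDerivAt_eq_zero hderiv)

section InnerProductSpace

variable {G : Type*} [NormedAddCommGroup G] [InnerProductSpace ℝ G]

theorem norm_midpoint_sq_real (x y : G) :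
    ‖(2 : ℝ)⁻¹ • (x + y)‖ ^ 2 = (‖x‖ ^ 2 + ‖y‖ ^ 2) / 2 - ‖x - y‖ ^ 2 / 4 := by
  rw [norm_smul, mul_pow, norm_add_sq_real, norm_sub_sq_real]
  norm_num
  ring

-- Completing the square: `κ/2 ‖z‖² + 2t⟪y, z⟫ = κ/2 ‖z + (2t/κ) y‖² - (2t²/κ) ‖y‖²` with `z = x - y`.
theorem neg_mul_norm_sq_le_mul_norm_sub_sq_add_mul_sub {κ t : ℝ} (hκ : 0 < κ) (ht : |t| ≤ κ / 2)
    (x y : G) :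
    -(2 * t ^ 2 / κ * ‖y‖ ^ 2) ≤ κ * ‖x - y‖ ^ 2 + t * (‖x‖ ^ 2 - ‖y‖ ^ 2) := by
  set z := x - y
  have hx : ‖x‖ ^ 2 = ‖y‖ ^ 2 + 2 * inner ℝ y z + ‖z‖ ^ 2 := by
    rw [← norm_add_sq_real, add_sub_cancel]
  have hsq : 0 ≤ ‖z + (2 * t / κ) • y‖ ^ 2 := sq_nonneg _
  rw [norm_add_sq_real, norm_smul, real_inner_smul_right, real_inner_comm, Real.norm_eq_abs,
    mul_pow, sq_abs] at hsq
  have hz : -(κ / 2) * ‖z‖ ^ 2 ≤ t * ‖z‖ ^ 2 :=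
    mul_le_mul_of_nonneg_right (neg_le_of_abs_le ht) (sq_nonneg _)
  have hsquare : κ / 2 * (‖z‖ ^ 2 + 2 * (2 * t / κ * inner ℝ y z) + (2 * t / κ) ^ 2 * ‖y‖ ^ 2)
      = κ / 2 * ‖z‖ ^ 2 + 2 * t * inner ℝ y z + 2 * t ^ 2 / κ * ‖y‖ ^ 2 := by
    field_simp
  have hscaled := mul_nonneg (half_pos hκ).le hsq
  rw [hx]
  linarith

end InnerProductSpace

section Lagrangian

variable {F G : Type*} [AddCommGroup F] [Module ℝ F] [NormedAddCommGroup G] [InnerProductSpace ℝ G]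

def lagrangian (J : F → ℝ) (A : F →ₗ[ℝ] G) (g : G) (τ lam : ℝ) (f : F) : ℝ :=
  J f + lam * (‖A f - g‖ ^ 2 - τ ^ 2)

variable {J : F → ℝ} {A : F →ₗ[ℝ] G} {g : G} {τ lam : ℝ} {f₀ : F}

theorem lagrangian_add (t : ℝ) (f : F) :
    lagrangian J A g τ (lam + t) f = lagrangian J A g τ lam f + t * (‖A f - g‖ ^ 2 - τ ^ 2) := by
  unfold lagrangian
  ring

theorem ConvexOn.lagrangian_add_norm_sq_le (hJ : ConvexOn ℝ univ J)
    (hmin : ∀ f, lagrangian J A g τ lam f₀ ≤ lagrangian J A g τ lam f) (f : F) :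
    lagrangian J A g τ lam f₀ + lam / 2 * ‖A f - A f₀‖ ^ 2 ≤ lagrangian J A g τ lam f := by
  have hJmid : J ((2 : ℝ)⁻¹ • (f + f₀)) ≤ (J f + J f₀) / 2 := by
    have := hJ.2 (mem_univ f) (mem_univ f₀) (by norm_num : (0 : ℝ) ≤ 2⁻¹)
      (by norm_num : (0 : ℝ) ≤ 2⁻¹) (by norm_num)
    rw [← smul_add, smul_eq_mul, smul_eq_mul] at this
    linarith
  have hAmid : A ((2 : ℝ)⁻¹ • (f + f₀)) - g = (2 : ℝ)⁻¹ • ((A f - g) + (A f₀ - g)) := by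
    rw [map_smul, map_add]
    module
  have hmid := hmin ((2 : ℝ)⁻¹ • (f + f₀))
  unfold lagrangian at hmid ⊢
  rw [hAmid, norm_midpoint_sq_real, sub_sub_sub_cancel_right] at hmid
  nlinarith

theorem ConvexOn.lagrangian_add_mul_sub_mul_sq_le (hJ : ConvexOn ℝ univ J) (hlam : 0 < lam)
    (hmin : ∀ f, lagrangian J A g τ lam f₀ ≤ lagrangian J A g τ lam f) {t : ℝ}
    (ht : |t| ≤ lam / 4) (f : F) :
    lagrangian J A g τ lam f₀ + t * (‖A f₀ - g‖ ^ 2 - τ ^ 2) - 4 * ‖A f₀ - g‖ ^ 2 / lam * t ^ 2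
      ≤ lagrangian J A g τ (lam + t) f := by
  have hgrowth := hJ.lagrangian_add_norm_sq_le hmin f
  have hperturb := neg_mul_norm_sq_le_mul_norm_sub_sq_add_mul_sub (half_pos hlam)
    (by linarith : |t| ≤ lam / 2 / 2) (A f - g) (A f₀ - g)
  rw [sub_sub_sub_cancel_right] at hperturb
  have hconst : 2 * t ^ 2 / (lam / 2) * ‖A f₀ - g‖ ^ 2 = 4 * ‖A f₀ - g‖ ^ 2 / lam * t ^ 2 := by
    field_simp
    ring
  rw [lagrangian_add]
  linarith

end Lagrangian

theorem discrepancy_at_dual_maximizer_general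
    {F G : Type*} [NormedAddCommGroup F] [InnerProductSpace ℝ F]
    [NormedAddCommGroup G] [InnerProductSpace ℝ G]
    (A : F →L[ℝ] G) (g : G) (J : F → ℝ)
    (hJconv : ConvexOn ℝ Set.univ J)
    (τ : ℝ)
    (D : ℝ → ℝ)
    (hD : ∀ lam : ℝ, D lam = ⨅ f : F, (J f + lam * (‖A f - g‖ ^ 2 - τ ^ 2)))
    (lam : ℝ) (hlam : 0 < lam)
    (hmax : ∀ μ : ℝ, 0 < μ → D μ ≤ D lam)
    (flam : F)
    (hflam : ∀ f : F,
      J flam + lam * (‖A flam - g‖ ^ 2 - τ ^ 2) ≤ J f + lam * (‖A f - g‖ ^ 2 - τ ^ 2)) :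
    ‖A flam - g‖ ^ 2 = τ ^ 2 := by
  let L := lagrangian J (A : F →ₗ[ℝ] G) g τ
  have hDlam : D lam = L lam flam :=
    (hD lam).trans (show IsLeast (range (L lam)) (L lam flam) from
      ⟨⟨flam, rfl⟩, forall_mem_range.2 hflam⟩).isGLB.ciInf_eq
  refine sub_eq_zero.mp (eq_zero_of_forall_abs_le_mul_le_mul_sq (C := 4 * ‖A flam - g‖ ^ 2 / lam)
    (by positivity : 0 < lam / 4) fun t ht => ?_)
  have hpos : 0 < lam + t := by linarith [neg_abs_le t]
  have hlower : L lam flam + t * (‖A flam - g‖ ^ 2 - τ ^ 2)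
      - 4 * ‖A flam - g‖ ^ 2 / lam * t ^ 2 ≤ D (lam + t) :=
    (hD _).symm ▸ le_ciInf (hJconv.lagrangian_add_mul_sub_mul_sq_le hlam hflam ht)
  linarith [hmax _ hpos]

/-- discrepancy at the dual maximizer, from Theorem
`estimation-lambda`. Under Assumption 1 and strict convexity of `J` along `ker A`, with
`dist(g, closure (A F)) < τ < ‖g‖` and `ε = τ²`: if `λ̄ > 0` maximizes the dual function
`D` over `(0, ∞)`, then the unique minimizer `f_λ̄` of the Lagrangian `L(·, λ̄)` satisfies
`‖A f_λ̄ − g‖² = τ²`. -/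
theorem discrepancy_at_dual_maximizer
    {F G : Type*} [NormedAddCommGroup F] [InnerProductSpace ℝ F] [CompleteSpace F]
    [NormedAddCommGroup G] [InnerProductSpace ℝ G] [CompleteSpace G]
    (A : F →L[ℝ] G) (g : G) (J : F → ℝ)
    (hJconv : ConvexOn ℝ Set.univ J)
    (hJlsc : LowerSemicontinuous J)
    (hJcoer : Filter.Tendsto J (Filter.comap (fun f : F => ‖f‖) Filter.atTop) Filter.atTop)
    (hJstrict : ∀ f f' : F, f ≠ f' → A (f - f') = 0 →
      J ((2 : ℝ)⁻¹ • (f + f')) < (J f + J f') / 2)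
    (τ : ℝ) (hτpos : 0 < τ)
    (hdist : Metric.infDist g (closure (Set.range fun f : F => A f)) < τ)
    (hτg : τ < ‖g‖)
    (D : ℝ → ℝ)
    (hD : ∀ lam : ℝ, D lam = ⨅ f : F, (J f + lam * (‖A f - g‖ ^ 2 - τ ^ 2)))
    (lam : ℝ) (hlam : 0 < lam)
    (hmax : ∀ μ : ℝ, 0 < μ → D μ ≤ D lam)
    (flam : F)
    (hflam : ∀ f : F,
      J flam + lam * (‖A flam - g‖ ^ 2 - τ ^ 2) ≤ J f + lam * (‖A f - g‖ ^ 2 - τ ^ 2)) :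
    ‖A flam - g‖ ^ 2 = τ ^ 2 :=
  discrepancy_at_dual_maximizer_general A g J hJconv τ D hD lam hlam hmax flam hflam
end
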